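/- For each integer x and each integer t ≥ 1 we have a₁(x,t) = a₁(−x,t) and a₂(x,t) + a₁(x,t) = a₂(2−x,t) + a₁(2−x,t). -/

import Mathlib

open scoped BigOperators

/-- The final x-coordinate of a checker path from `(0,0)` encoded by its sequence of moves
(`true` = move `(1,1)`, `false` = move `(-1,1)`). -/
def moveEndpoint {n : ℕ} (d : Fin n → Bool) : ℤ :=
  ∑ k, (if d k then (1 : ℤ) else -1)

/-- The number of turns of a checker path encoded by its sequence of moves. -/
def nturns {n : ℕ} (d : Fin n → Bool) : ℕ :=
  ((List.ofFn d).zip (List.ofFn d).tail).countP fun p => p.1 != p.2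

/-- Checker paths from `(0,0)` to `(x,t)` whose first step is to `(1,1)`,
encoded by their sequences of moves. -/
def cpaths (x t : ℤ) : Finset (Fin t.toNat → Bool) :=
  Finset.univ.filter fun d => moveEndpoint d = x ∧ (List.ofFn d).headI = true

/-- Feynman checkers amplitude `a(x,t) = 2^((1-t)/2) * i * ∑ₛ (-i)^turns(s)`. -/
noncomputable def a (x t : ℤ) : ℂ :=
  (Real.sqrt 2 : ℂ) ^ (1 - t) * Complex.I * ∑ d ∈ cpaths x t, (-Complex.I) ^ nturns d

/-!
Split the sum over paths according to the last move. Paths ending with a move `(1,1)`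
contribute a real number and paths ending with `(-1,1)` a purely imaginary one, so up to the
factor `2^((1-t)/2)` the two partial sums are `a₂` and `a₁`. Deleting the last move costs a
factor `-i` exactly when it removes a turn, which turns the partial sums into integer
solutions of a lattice Dirac equation with initial data concentrated at `x = 1`. This
recursion preserves both symmetries, so they follow by induction on `t`.
-/

open Complex

theorem List.zip_tail_append_pair {α : Type*} : ∀ (l : List α) (a c : α),
    (l ++ [a, c]).zip (l ++ [a, c]).tail = (l ++ [a]).zip (l ++ [a]).tail ++ [(a, c)]
  | [], _, _ => rfl
  | [_], _, _ => rfl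
  | x :: y :: l, a, c => by
    have ih := zip_tail_append_pair (y :: l) a c
    simp only [cons_append, tail_cons, zip_cons_cons] at ih ⊢
    rw [ih]

lemma nturns_snoc {m : ℕ} (d : Fin (m + 1) → Bool) (c : Bool) :
    nturns (Fin.snoc d c : Fin (m + 2) → Bool) =
      nturns d + if d (Fin.last m) = c then 0 else 1 := by
  have hd : List.ofFn d = List.ofFn (fun i => d i.castSucc) ++ [d (Fin.last m)] :=
    List.ofFn_succ_last
  have hdc : List.ofFn (Fin.snoc d c : Fin (m + 2) → Bool) =
      List.ofFn (fun i => d i.castSucc) ++ [d (Fin.last m), c] := by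
    rw [List.ofFn_succ_last]
    simp only [Fin.snoc_castSucc, Fin.snoc_last, hd]
    simp
  unfold nturns
  rw [hdc, hd, List.zip_tail_append_pair, List.countP_append]
  simp

lemma moveEndpoint_snoc {n : ℕ} (d : Fin n → Bool) (c : Bool) :
    moveEndpoint (Fin.snoc d c : Fin (n + 1) → Bool) = moveEndpoint d + if c then 1 else -1 := by
  simp [moveEndpoint, Fin.sum_univ_castSucc]

mutual
/-- With `amp₂`, the unnormalised solution of the Dirac equation:
`a x (m + 1) = 2^(-m/2) * (amp₁ m x + i * amp₂ m x)`. -/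
def amp₁ : ℕ → ℤ → ℤ
  | 0, _ => 0
  | m + 1, x => amp₁ m (x + 1) + amp₂ m (x + 1)
def amp₂ : ℕ → ℤ → ℤ
  | 0, x => if x = 1 then 1 else 0
  | m + 1, x => amp₂ m (x - 1) - amp₁ m (x - 1)
end

noncomputable def pathSum (x : ℤ) (m : ℕ) (b : Bool) : ℂ :=
  ∑ d : Fin (m + 1) → Bool with moveEndpoint d = x ∧ d 0 = true ∧ d (Fin.last m) = b,
    (-I) ^ nturns d

lemma pathSum_succ (x : ℤ) (m : ℕ) (b : Bool) :
    pathSum x (m + 1) b =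
      ∑ c : Bool, (-I) ^ (if c = b then 0 else 1) * pathSum (x - if b then 1 else -1) m c := by
  set y := x - if b then 1 else -1
  have fiber : ∀ c : Bool, (-I) ^ (if c = b then 0 else 1) * pathSum y m c =
      ∑ d ∈ {d : Fin (m + 1) → Bool | moveEndpoint d = y ∧ d 0 = true} with d (Fin.last m) = c,
        (-I) ^ (if d (Fin.last m) = b then 0 else 1) * (-I) ^ nturns d := by
    intro c
    simp only [pathSum, Finset.mul_sum, Finset.filter_filter, and_assoc]
    exact Finset.sum_congr rfl fun d hd => by rw [(Finset.mem_filter.1 hd).2.2.2]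
  simp only [fiber, Finset.sum_fiberwise]
  rw [pathSum]
  have hsnoc : ∀ d : Fin (m + 1) → Bool, (Fin.snoc d b : Fin (m + 2) → Bool) 0 = d 0 :=
    fun d => Fin.snoc_castSucc (i := 0) ..
  symm
  refine Finset.sum_nbij' (Fin.snoc · b) Fin.init ?_ ?_ (fun d _ => Fin.init_snoc _ _) ?_ ?_
  all_goals simp only [Finset.mem_filter, Finset.mem_univ, true_and]
  · rintro d ⟨hd, hd0⟩
    simp [moveEndpoint_snoc, hsnoc, hd, hd0, y]
  · rintro e ⟨he, he0, heb⟩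
    obtain ⟨d, rfl⟩ : ∃ d, Fin.snoc d b = e := ⟨Fin.init e, heb ▸ Fin.snoc_init_self e⟩
    rw [moveEndpoint_snoc] at he
    rw [Fin.init_snoc, ← hsnoc d]
    exact ⟨eq_sub_of_add_eq he, he0⟩
  · rintro e ⟨-, -, heb⟩
    rw [← heb, Fin.snoc_init_self]
  · intro d _
    rw [nturns_snoc, pow_add, mul_comm]

lemma pathSum_zero (x : ℤ) (b : Bool) :
    pathSum x 0 b = if x = 1 ∧ b = true then 1 else 0 := by
  rw [pathSum, Finset.sum_filter, ← (Equiv.funUnique (Fin 1) Bool).symm.sum_comp,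
    Fintype.sum_bool]
  cases b <;> simp [moveEndpoint, nturns, eq_comm (a := (1 : ℤ))]

lemma pathSum_eq_amp (m : ℕ) (x : ℤ) :
    pathSum x m true = amp₂ m x ∧ pathSum x m false = -I * amp₁ m x := by
  induction m generalizing x with
  | zero => simp [pathSum_zero, amp₁, amp₂]
  | succ m ih =>
    simp only [pathSum_succ, Fintype.sum_bool, (ih _).1, (ih _).2, amp₁, amp₂]
    push_cast
    simp only [sub_neg_eq_add]
    exact ⟨by linear_combination (amp₁ m (x - 1) : ℂ) * I_sq, by ring⟩

lemma amp_symm (m : ℕ) (x : ℤ) :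
    amp₁ m (-x) = amp₁ m x ∧ amp₁ m (2 - x) + amp₂ m (2 - x) = amp₁ m x + amp₂ m x := by
  induction m generalizing x with
  | zero =>
    refine ⟨rfl, ?_⟩
    simp only [amp₁, amp₂, zero_add]
    split_ifs <;> omega
  | succ m ih =>
    have reflect_succ := (ih (x + 1)).2
    have neg_pred := (ih (x - 1)).1
    have reflect_pred := (ih (x - 1)).2
    simp only [amp₁, amp₂]
    ring_nf at reflect_succ neg_pred reflect_pred ⊢
    constructor <;> linarith

lemma sum_cpaths (x : ℤ) (m : ℕ) :
    ∑ d ∈ cpaths x (m + 1 : ℕ), (-I) ^ nturns d = pathSum x m true + pathSum x m false := by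
  rw [← Finset.sum_fiberwise (cpaths x (m + 1 : ℕ)) fun d : Fin (m + 1) → Bool => d (Fin.last m),
    Fintype.sum_bool]
  simp only [pathSum, cpaths, Finset.filter_filter, List.ofFn_succ, List.headI_cons, and_assoc]
  rfl

lemma a_natCast_succ (x : ℤ) (m : ℕ) :
    a x (m + 1 : ℕ) = ⟨√2 ^ (-m : ℤ) * amp₁ m x, √2 ^ (-m : ℤ) * amp₂ m x⟩ := by
  have hscale : (√2 : ℂ) ^ (1 - ((m + 1 : ℕ) : ℤ)) = ((√2 ^ (-m : ℤ) : ℝ) : ℂ) := by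
    push_cast; ring_nf
  rw [a, sum_cpaths, (pathSum_eq_amp m x).1, (pathSum_eq_amp m x).2, hscale,
    Complex.mk_eq_add_mul_I]
  push_cast
  linear_combination (-(√2 ^ (-m : ℤ) : ℂ) * amp₁ m x) * I_sq

/-- Symmetry of the amplitudes in the basic model. -/
theorem symmetry (x t : ℤ) (ht : 1 ≤ t) :
    (a x t).re = (a (-x) t).re ∧
    (a x t).im + (a x t).re = (a (2 - x) t).im + (a (2 - x) t).re := by
  obtain ⟨m, rfl⟩ : ∃ m : ℕ, t = (m + 1 : ℕ) := ⟨(t - 1).toNat, by omega⟩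
  obtain ⟨h_neg, h_reflect⟩ := amp_symm m x
  simp only [a_natCast_succ, h_neg, true_and]
  have h_reflect' : (amp₁ m (2 - x) + amp₂ m (2 - x) : ℝ) = amp₁ m x + amp₂ m x := by
    exact_mod_cast h_reflect
  linear_combination -√2 ^ (-m : ℤ) * h_reflect'
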